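/- arXiv:1702.00931 — 4 statements merged into one kernel-verified Lean document; each statement's English description precedes it below -/
import Mathlib

section
/- Uniform convergence of discrete resolvent sums to the continuous integral: let 0 < λ_min ≤ C and γ_k := c_γ k^{-α} with c_γ > 0 and α ∈ (1/2,1). Then there exists a sequence of positive reals (a_n) with a_n → 0, depending only on α, c_γ, λ_min and C, such that for all n ≥ 1 and all λ, λ' ∈ [λ_min, C], | (1/γ_n) ∑_{k=1}^n γ_k² ∏_{j=k+1}^n (1 − γ_j λ)(1 − γ_j λ') − 1/(λ + λ') | ≤ a_n. (Note 1/(λ+λ') = ∫_0^∞ e^{-(λ+λ')s} ds.) -/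
/-!
Write `E_n(λ, λ')` for the error `γ_n⁻¹ S_n - 1/(λ + λ')`. The discounted sum obeys
`S_{n+1} = (1 - γ_{n+1} λ)(1 - γ_{n+1} λ') S_n + γ_{n+1}²`, so `E_{n+1} = ρ E_n + ε` with
`ρ = (1 - γ_{n+1} λ)(1 - γ_{n+1} λ') γ_n / γ_{n+1}` and
`0 ≤ ε ≤ (γ_n / γ_{n+1} - 1 + γ_{n+1}² C²) / (2 λ_min)`.
Because `α < 1`, `(n + 1) γ_{n+1} → ∞`, so the excess `γ_n / γ_{n+1} - 1 ≤ 2 / (n + 1)` is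
eventually at most `λ_min γ_{n+1} / 2`, which gives `ρ ≤ 1 - λ_min γ_{n+1} / 2`. Both bounds are
uniform in `λ, λ' ∈ [λ_min, C]`, so `|E_n|` is dominated by the scalar recursion
`W_{k+1} = (1 - g_k) W_k + g_k e_k` with `∑ g_k = ∞` and `e_k → 0`, which tends to `0`
(Chung's lemma). Before the recursion takes over, each `E_n` is continuous on the compact square
`[λ_min, C]²`, hence bounded.
-/

open Filter Finset
open scoped Topology

theorem tendsto_prod_Ico_one_sub_of_not_summable {g : ℕ → ℝ} (hg : ∀ k, g k ∈ Set.Icc 0 1)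
    (hgs : ¬ Summable g) (M : ℕ) :
    Tendsto (fun m => ∏ i ∈ Ico M m, (1 - g i)) atTop (𝓝 0) := by
  have hsum : Tendsto (fun m => ∑ i ∈ Ico M m, g i) atTop atTop := by
    have := (not_summable_iff_tendsto_nat_atTop_of_nonneg fun k => (hg k).1).1 hgs
    refine (tendsto_atTop_add_const_right _ (-∑ i ∈ range M, g i) this).congr' ?_
    filter_upwards [eventually_ge_atTop M] with m hm
    rw [sum_Ico_eq_sub g hm, sub_eq_add_neg]
  refine tendsto_of_tendsto_of_tendsto_of_le_of_le tendsto_const_nhds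
    (Real.tendsto_exp_atBot.comp (tendsto_neg_atTop_atBot.comp hsum))
    (fun m => prod_nonneg fun i _ => sub_nonneg.2 (hg i).2) fun m => ?_
  simp only [Function.comp_apply, ← sum_neg_distrib, Real.exp_sum]
  exact prod_le_prod (fun i _ => sub_nonneg.2 (hg i).2)
    fun i _ => by linarith [Real.add_one_le_exp (-g i)]

theorem tendsto_zero_of_le_one_sub_mul_add {W g e : ℕ → ℝ} (hW : ∀ k, 0 ≤ W k)
    (hg : ∀ k, g k ∈ Set.Icc 0 1) (hgs : ¬ Summable g) (he : Tendsto e atTop (𝓝 0))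
    (hWs : ∀ k, W (k + 1) ≤ (1 - g k) * W k + g k * e k) :
    Tendsto W atTop (𝓝 0) := by
  refine tendsto_order.2 ⟨fun a ha => Eventually.of_forall fun k => ha.trans_le (hW k),
    fun ε hε => ?_⟩
  obtain ⟨M, hM⟩ := eventually_atTop.1 (he.eventually_lt_const (half_pos hε))
  have hdecay : ∀ m ≥ M, W m ≤ ε / 2 + (∏ i ∈ Ico M m, (1 - g i)) * W M := by
    intro m hm
    induction m, hm using Nat.le_induction with
    | base => simp only [Ico_self, prod_empty, one_mul]; linarith
    | succ m hm ih =>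
      rw [prod_Ico_succ_top hm]
      have h1 := mul_le_mul_of_nonneg_left ih (sub_nonneg.2 (hg m).2)
      have h2 := mul_le_mul_of_nonneg_left (hM m hm).le (hg m).1
      linarith [hWs m]
  have hprod := (tendsto_prod_Ico_one_sub_of_not_summable hg hgs M).mul_const (W M)
  rw [zero_mul] at hprod
  have hsmall := hprod.eventually_lt_const (half_pos hε)
  filter_upwards [hsmall, eventually_ge_atTop M] with m hm hMm
  linarith [hdecay m hMm]

theorem exists_uniform_bound_of_eventually_contracting {ι : Type*} {s : Set ι}
    {E : ι → ℕ → ℝ} {g e : ℕ → ℝ} (hbdd : ∀ n, ∃ B, ∀ i ∈ s, |E i n| ≤ B)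
    (hg : ∀ᶠ n in atTop, g n ∈ Set.Ico 0 1) (hgs : ¬ Summable g) (he : Tendsto e atTop (𝓝 0))
    (hstep : ∀ᶠ n in atTop, ∀ i ∈ s, |E i (n + 1)| ≤ (1 - g n) * |E i n| + g n * e n) :
    ∃ a : ℕ → ℝ, (∀ n, 0 < a n) ∧ Tendsto a atTop (𝓝 0) ∧ ∀ i ∈ s, ∀ n, |E i n| ≤ a n := by
  obtain ⟨N, hN⟩ := eventually_atTop.1 (hg.and hstep)
  choose B hB using hbdd
  let W : ℕ → ℝ := fun m => Nat.rec (|B N| + 1)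
    (fun k w => (1 - g (k + N)) * w + g (k + N) * |e (k + N)|) m
  have hW_succ (k : ℕ) : W (k + 1) = (1 - g (k + N)) * W k + g (k + N) * |e (k + N)| := rfl
  have hW_pos (k : ℕ) : 0 < W k := by
    induction k with
    | zero => exact add_pos_of_nonneg_of_pos (abs_nonneg _) one_pos
    | succ k ih =>
      obtain ⟨⟨hg₀, hg₁⟩, -⟩ := hN (k + N) (Nat.le_add_left _ _)
      rw [hW_succ]
      exact add_pos_of_pos_of_nonneg (mul_pos (sub_pos.2 hg₁) ih) (mul_nonneg hg₀ (abs_nonneg _))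
  have hEW : ∀ i ∈ s, ∀ k, |E i (k + N)| ≤ W k := by
    intro i hi k
    induction k with
    | zero =>
      show |E i (0 + N)| ≤ |B N| + 1
      rw [zero_add]
      linarith [hB N i hi, le_abs_self (B N)]
    | succ k ih =>
      obtain ⟨⟨hg₀, hg₁⟩, hstep⟩ := hN (k + N) (Nat.le_add_left _ _)
      rw [add_right_comm, hW_succ]
      exact (hstep i hi).trans (add_le_add (mul_le_mul_of_nonneg_left ih (sub_nonneg.2 hg₁.le))
        (mul_le_mul_of_nonneg_left (le_abs_self _) hg₀))
  have hW_tendsto : Tendsto W atTop (𝓝 0) := by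
    refine tendsto_zero_of_le_one_sub_mul_add (g := fun k => g (k + N))
      (e := fun k => |e (k + N)|) (fun k => (hW_pos k).le) (fun k => ?_)
      ((summable_nat_add_iff N).not.2 hgs)
      (by simpa using (he.comp (tendsto_add_atTop_nat N)).abs) fun k => (hW_succ k).le
    obtain ⟨⟨hg₀, hg₁⟩, -⟩ := hN (k + N) (Nat.le_add_left _ _)
    exact ⟨hg₀, hg₁.le⟩
  refine ⟨fun n => if n < N then |B n| + 1 else W (n - N), fun n => ?_, ?_, fun i hi n => ?_⟩
  · dsimp only
    split_ifs
    · positivity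
    · exact hW_pos _
  · refine (hW_tendsto.comp (tendsto_sub_atTop_nat N)).congr' ?_
    filter_upwards [eventually_ge_atTop N] with n hn
    simp [not_lt.2 hn]
  · dsimp only
    split_ifs with hn
    · linarith [hB n i hi, le_abs_self (B n)]
    · simpa [Nat.sub_add_cancel (not_lt.1 hn)] using hEW i hi (n - N)

def discountedSum (a w : ℕ → ℝ) (n : ℕ) : ℝ :=
  ∑ k ∈ Icc 1 n, a k * ∏ j ∈ Icc (k + 1) n, w j

theorem discountedSum_succ (a w : ℕ → ℝ) (n : ℕ) :
    discountedSum a w (n + 1) = w (n + 1) * discountedSum a w n + a (n + 1) := by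
  rw [discountedSum, sum_Icc_succ_top (Nat.le_add_left 1 n),
    Icc_eq_empty_of_lt (Nat.lt_succ_self _), prod_empty, mul_one, discountedSum, mul_sum]
  congr 1
  refine sum_congr rfl fun k hk => ?_
  rw [prod_Icc_succ_top (by simp at hk; omega)]
  ring

noncomputable def resolventError (γ : ℕ → ℝ) (lam lam' : ℝ) (n : ℕ) : ℝ :=
  1 / γ n * discountedSum (fun k => γ k ^ 2) (fun j => (1 - γ j * lam) * (1 - γ j * lam')) n -
    1 / (lam + lam')

theorem resolventError_succ {γ : ℕ → ℝ} {lam lam' : ℝ} {n : ℕ} (hγ₀ : γ n ≠ 0)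
    (hγ₁ : γ (n + 1) ≠ 0) (hμ : lam + lam' ≠ 0) :
    resolventError γ lam lam' (n + 1) =
      (1 - γ (n + 1) * lam) * (1 - γ (n + 1) * lam') * (γ n / γ (n + 1)) *
          resolventError γ lam lam' n +
        ((1 - γ (n + 1) * lam) * (1 - γ (n + 1) * lam') * (γ n / γ (n + 1) - 1) +
          γ (n + 1) ^ 2 * (lam * lam')) / (lam + lam') := by
  rw [resolventError, resolventError, discountedSum_succ]
  field_simp
  ring

theorem abs_resolventError_succ_le {γ : ℕ → ℝ} {l C lam lam' h : ℝ} {n : ℕ} (hl : 0 < l)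
    (hlam : lam ∈ Set.Icc l C) (hlam' : lam' ∈ Set.Icc l C) (hγ : 0 < γ (n + 1))
    (hγC : γ (n + 1) * C ≤ 1) (hmono : γ (n + 1) ≤ γ n) (hratio : γ n ≤ γ (n + 1) * (1 + h))
    (hh : 2 * h ≤ γ (n + 1) * l) :
    |resolventError γ lam lam' (n + 1)| ≤
      (1 - γ (n + 1) * l / 2) * |resolventError γ lam lam' n| +
        (h + γ (n + 1) ^ 2 * C ^ 2) / (2 * l) := by
  obtain ⟨hl₁, hC₁⟩ := hlam
  obtain ⟨hl₂, hC₂⟩ := hlam'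
  have hlam₀ : 0 < lam := hl.trans_le hl₁
  have hlam₀' : 0 < lam' := hl.trans_le hl₂
  set x := γ (n + 1)
  set q := (1 - x * lam) * (1 - x * lam')
  set r := γ n / x
  have hxlam : x * lam ≤ 1 := (mul_le_mul_of_nonneg_left hC₁ hγ.le).trans hγC
  have hxlam' : x * lam' ≤ 1 := (mul_le_mul_of_nonneg_left hC₂ hγ.le).trans hγC
  have hq₀ : 0 ≤ q := mul_nonneg (sub_nonneg.2 hxlam) (sub_nonneg.2 hxlam')
  have hq₁ : q ≤ 1 - x * l := by
    have := mul_le_mul_of_nonneg_left hl₁ hγ.le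
    have := mul_nonneg (sub_nonneg.2 hxlam) (mul_pos hγ hlam₀').le
    calc q = 1 - x * lam - (1 - x * lam) * (x * lam') := by ring
      _ ≤ 1 - x * l := by linarith
  have hr₁ : 1 ≤ r := (one_le_div hγ).2 hmono
  have hr₂ : r ≤ 1 + h := (div_le_iff₀' hγ).2 hratio
  have hcontract : q * r ≤ 1 - x * l / 2 := by nlinarith
  have hnum₀ : 0 ≤ q * (r - 1) + x ^ 2 * (lam * lam') :=
    add_nonneg (mul_nonneg hq₀ (sub_nonneg.2 hr₁)) (by positivity)
  have hnum₁ : q * (r - 1) + x ^ 2 * (lam * lam') ≤ h + x ^ 2 * C ^ 2 := by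
    have : lam * lam' ≤ C ^ 2 := by nlinarith
    nlinarith
  rw [resolventError_succ (hγ.trans_le hmono).ne' hγ.ne' (by positivity)]
  refine (abs_add_le _ _).trans (add_le_add ?_ ?_)
  · rw [abs_mul, abs_of_nonneg (mul_nonneg hq₀ (zero_le_one.trans hr₁))]
    exact mul_le_mul_of_nonneg_right hcontract (abs_nonneg _)
  · rw [abs_of_nonneg (div_nonneg hnum₀ (by positivity))]
    exact div_le_div₀ (hnum₀.trans hnum₁) hnum₁ (by positivity) (by linarith)

theorem exists_abs_resolventError_le (γ : ℕ → ℝ) {l : ℝ} (hl : 0 < l) (C : ℝ) (n : ℕ) :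
    ∃ B, ∀ p ∈ Set.Icc l C ×ˢ Set.Icc l C, |resolventError γ p.1 p.2 n| ≤ B := by
  have hcont : ContinuousOn (fun p : ℝ × ℝ => resolventError γ p.1 p.2 n)
      (Set.Icc l C ×ˢ Set.Icc l C) := by
    unfold resolventError discountedSum
    refine ContinuousOn.sub (by fun_prop) (continuousOn_const.div (by fun_prop) fun p hp => ?_)
    exact (add_pos (hl.trans_le hp.1.1) (hl.trans_le hp.2.1)).ne'
  exact (isCompact_Icc.prod isCompact_Icc).exists_bound_of_continuousOn hcont

noncomputable def powerStep (c α : ℝ) (k : ℕ) : ℝ := c * (k : ℝ) ^ (-α)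

section PowerStep

variable {c α : ℝ}

theorem powerStep_pos (hc : 0 < c) {k : ℕ} (hk : 0 < k) : 0 < powerStep c α k :=
  mul_pos hc (Real.rpow_pos_of_pos (Nat.cast_pos.2 hk) _)

theorem tendsto_powerStep (c : ℝ) (hα : 0 < α) : Tendsto (powerStep c α) atTop (𝓝 0) := by
  have h := ((tendsto_rpow_neg_atTop hα).comp tendsto_natCast_atTop_atTop).const_mul c
  rwa [mul_zero] at h

theorem tendsto_natCast_mul_powerStep (hc : 0 < c) (hα : α < 1) :
    Tendsto (fun k : ℕ => k * powerStep c α k) atTop atTop := by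
  refine (((tendsto_rpow_atTop (sub_pos.2 hα)).comp tendsto_natCast_atTop_atTop).const_mul_atTop
    hc).congr' ?_
  filter_upwards [eventually_gt_atTop 0] with k hk
  rw [Function.comp_apply, powerStep, sub_eq_add_neg,
    Real.rpow_add (Nat.cast_pos.2 hk), Real.rpow_one]
  ring

theorem not_summable_powerStep (hc : c ≠ 0) (hα : α ≤ 1) : ¬ Summable (powerStep c α) := by
  change ¬ Summable fun k : ℕ => c * (k : ℝ) ^ (-α)
  rw [summable_mul_left_iff hc, Real.summable_nat_rpow]
  linarith

theorem powerStep_succ_le (hc : 0 ≤ c) (hα : 0 ≤ α) {n : ℕ} (hn : 0 < n) :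
    powerStep c α (n + 1) ≤ powerStep c α n :=
  mul_le_mul_of_nonneg_left (Real.rpow_le_rpow_of_nonpos (Nat.cast_pos.2 hn)
    (Nat.cast_le.2 n.le_succ) (neg_nonpos.2 hα)) hc

theorem powerStep_le_powerStep_succ_mul (hc : 0 ≤ c) (hα : α ≤ 1) {n : ℕ} (hn : 0 < n) :
    powerStep c α n ≤ powerStep c α (n + 1) * (1 + 2 / (n + 1 : ℕ)) := by
  have hn₀ : (0 : ℝ) < n := Nat.cast_pos.2 hn
  have hn₁ : (0 : ℝ) < (n + 1 : ℕ) := Nat.cast_pos.2 n.succ_pos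
  have hsplit : (n : ℝ) ^ (-α) = ((n + 1 : ℕ) : ℝ) ^ (-α) * (((n + 1 : ℕ) : ℝ) / n) ^ α := by
    rw [Real.div_rpow hn₁.le hn₀.le, Real.rpow_neg hn₁.le, Real.rpow_neg hn₀.le]
    field_simp
  have hgrowth : (((n + 1 : ℕ) : ℝ) / n) ^ α ≤ 1 + 2 / (n + 1 : ℕ) := by
    refine (Real.rpow_le_self_of_one_le ((one_le_div hn₀).2 (by simp)) hα).trans ?_
    rw [div_le_iff₀ hn₀, add_mul, one_mul, div_mul_eq_mul_div, ← sub_le_iff_le_add',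
      le_div_iff₀ hn₁]
    push_cast
    nlinarith [(Nat.one_le_cast (α := ℝ)).2 hn]
  rw [powerStep, powerStep, hsplit, mul_assoc]
  gcongr

theorem eventually_abs_resolventError_powerStep_succ_le (hc : 0 < c) (hα₀ : 0 < α)
    (hα₁ : α < 1) {l : ℝ} (hl : 0 < l) (C : ℝ) :
    ∀ᶠ n : ℕ in atTop, ∀ p ∈ Set.Icc l C ×ˢ Set.Icc l C,
      |resolventError (powerStep c α) p.1 p.2 (n + 1)| ≤
        (1 - l / 2 * powerStep c α (n + 1)) * |resolventError (powerStep c α) p.1 p.2 n| +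
          l / 2 * powerStep c α (n + 1) *
            ((2 / ((n + 1 : ℕ) * powerStep c α (n + 1)) + powerStep c α (n + 1) * C ^ 2) /
              l ^ 2) := by
  have hsmall := ((tendsto_powerStep c hα₀).mul_const C).comp (tendsto_add_atTop_nat 1)
  rw [zero_mul] at hsmall
  have hlarge := ((tendsto_natCast_mul_powerStep hc hα₁).comp
    (tendsto_add_atTop_nat 1)).const_mul_atTop hl
  filter_upwards [eventually_gt_atTop 0, hsmall.eventually_lt_const one_pos,
    hlarge.eventually_ge_atTop 4] with n hn hC h4 p hp
  have hx := powerStep_pos (α := α) hc n.succ_pos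
  refine (abs_resolventError_succ_le hl hp.1 hp.2 hx hC.le (powerStep_succ_le hc.le hα₀.le hn)
    (powerStep_le_powerStep_succ_mul hc.le hα₁.le hn) ?_).trans_eq ?_
  · have hn₁ : (0 : ℝ) < (n + 1 : ℕ) := Nat.cast_pos.2 n.succ_pos
    rw [Function.comp_apply] at h4
    rw [mul_div_assoc', div_le_iff₀ hn₁]
    linarith
  · field_simp

end PowerStep

theorem resolvent_sum_uniform_convergence_general
    (cγ α lmin C : ℝ) (hcγ : 0 < cγ) (hα₁ : 1/2 < α) (hα₂ : α < 1)
    (hlmin : 0 < lmin)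
    (γ : ℕ → ℝ) (hγ : ∀ k, γ k = cγ * (k : ℝ) ^ (-α)) :
    ∃ a : ℕ → ℝ, (∀ n, 0 < a n) ∧ Tendsto a atTop (𝓝 0) ∧
      ∀ n : ℕ, 1 ≤ n → ∀ lam ∈ Set.Icc lmin C, ∀ lam' ∈ Set.Icc lmin C,
        |(1 / γ n) * ∑ k ∈ Finset.Icc 1 n, (γ k) ^ 2 *
            ∏ j ∈ Finset.Icc (k+1) n, ((1 - γ j * lam) * (1 - γ j * lam'))
          - 1 / (lam + lam')| ≤ a n := by
  obtain rfl : γ = powerStep cγ α := funext hγ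
  have hα₀ : 0 < α := by linarith
  have hg : ∀ᶠ n in atTop, lmin / 2 * powerStep cγ α (n + 1) ∈ Set.Ico 0 1 := by
    have h := ((tendsto_powerStep cγ hα₀).const_mul (lmin / 2)).comp (tendsto_add_atTop_nat 1)
    rw [mul_zero] at h
    filter_upwards [h.eventually_lt_const one_pos] with n hn
    exact ⟨mul_nonneg (by positivity) (powerStep_pos hcγ n.succ_pos).le, hn⟩
  have hgs : ¬ Summable fun n => lmin / 2 * powerStep cγ α (n + 1) := by
    rw [summable_mul_left_iff (by positivity), summable_nat_add_iff 1]
    exact not_summable_powerStep hcγ.ne' hα₂.le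
  have he : Tendsto (fun n : ℕ => (2 / ((n + 1 : ℕ) * powerStep cγ α (n + 1)) +
      powerStep cγ α (n + 1) * C ^ 2) / lmin ^ 2) atTop (𝓝 0) := by
    have h := (((tendsto_const_nhds (x := (2 : ℝ))).div_atTop
      (tendsto_natCast_mul_powerStep hcγ hα₂)).add
        ((tendsto_powerStep cγ hα₀).mul_const (C ^ 2))).div_const (lmin ^ 2)
    rw [zero_mul, add_zero, zero_div] at h
    exact h.comp (tendsto_add_atTop_nat 1)
  obtain ⟨a, ha₀, ha, hbound⟩ := exists_uniform_bound_of_eventually_contracting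
    (s := Set.Icc lmin C ×ˢ Set.Icc lmin C) (E := fun p => resolventError (powerStep cγ α) p.1 p.2)
    (fun n => exists_abs_resolventError_le _ hlmin C n) hg hgs he
    (eventually_abs_resolventError_powerStep_succ_le hcγ hα₀ hα₂ hlmin C)
  exact ⟨a, ha₀, ha, fun n _ lam hlam lam' hlam' => hbound (lam, lam') ⟨hlam, hlam'⟩ n⟩

/-- **Uniform convergence of discrete resolvent sums to the continuous integral**
(Lemma B.1): for `γ_k = c_γ k^{-α}` with `α ∈ (1/2,1)`, there is a positive sequence
`a_n → 0` such that for all `n ≥ 1` and all `λ, λ' ∈ [λ_min, C]`,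
`|(1/γ_n) ∑_{k=1}^n γ_k² ∏_{j=k+1}^n (1-γ_j λ)(1-γ_j λ') - 1/(λ+λ')| ≤ a_n`. -/
theorem resolvent_sum_uniform_convergence
    (cγ α lmin C : ℝ) (hcγ : 0 < cγ) (hα₁ : 1/2 < α) (hα₂ : α < 1)
    (hlmin : 0 < lmin) (hlC : lmin ≤ C)
    (γ : ℕ → ℝ) (hγ : ∀ k, γ k = cγ * (k : ℝ) ^ (-α)) :
    ∃ a : ℕ → ℝ, (∀ n, 0 < a n) ∧ Tendsto a atTop (𝓝 0) ∧
      ∀ n : ℕ, 1 ≤ n → ∀ lam ∈ Set.Icc lmin C, ∀ lam' ∈ Set.Icc lmin C,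
        |(1 / γ n) * ∑ k ∈ Finset.Icc 1 n, (γ k) ^ 2 *
            ∏ j ∈ Finset.Icc (k+1) n, ((1 - γ j * lam) * (1 - γ j * lam'))
          - 1 / (lam + lam')| ≤ a n :=
  resolvent_sum_uniform_convergence_general cγ α lmin C hcγ hα₁ hα₂ hlmin γ hγ
end

section
/- Weighted exponential sum bound: for all constants a ∈ (0,1), b ∈ ℝ and c > 0, there is a positive constant C_{a,b,c} such that for all n ≥ 1, ∑_{k=1}^n k^{-a} k^{b} exp(c k^{1-a}) ≤ C_{a,b,c} · n^{b} exp(c n^{1-a}). -/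
/-!
Write `g x = c * x ^ (1 - a)`. Since `g` is concave with `g' n = c (1 - a) n ^ (-a)`, every
term with `k ≤ n` is at most `k ^ (b - a) * exp (g n) * q ^ (n - k)`, where
`q = exp (-c (1 - a) n ^ (-a))`. For `n < 2k` the weight `k ^ (b - a)` is comparable to
`n ^ (b - a)` and the geometric sum is at most `1 / (1 - q) ≲ n ^ a`. For `2k ≤ n` the factor
`q ^ (n - k) ≤ exp (-c (1 - a) n ^ (1 - a) / 2)` beats any power of `n`.
-/

open Real Finset

lemma exists_rpow_le_mul_exp_mul_rpow (d : ℝ) {ε r : ℝ} (hε : 0 < ε) (hr : 0 < r) :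
    ∃ C > 0, ∀ y : ℝ, 1 ≤ y → y ^ d ≤ C * exp (ε * y ^ r) := by
  obtain ⟨m, hm⟩ : ∃ m : ℕ, d ≤ r * m :=
    ⟨⌈d / r⌉₊, by rw [mul_comm, ← div_le_iff₀ hr]; exact Nat.le_ceil _⟩
  refine ⟨m.factorial / ε ^ m, by positivity, fun y hy => ?_⟩
  have hexp := pow_div_factorial_le_exp (ε * y ^ r) (by positivity) m
  calc y ^ d ≤ y ^ (r * m) := rpow_le_rpow_of_exponent_le hy hm
    _ = (ε * y ^ r) ^ m / m.factorial * (m.factorial / ε ^ m) := by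
      rw [rpow_mul (by linarith), rpow_natCast]
      field_simp
      ring
    _ ≤ m.factorial / ε ^ m * exp (ε * y ^ r) := by
      rw [mul_comm]; gcongr

lemma geom_sum_exp_neg_le {x : ℝ} (hx : 0 < x) (N : ℕ) :
    ∑ i ∈ range N, exp (-x) ^ i ≤ exp x / x := by
  have hq : exp (-x) < 1 := exp_lt_one_iff.mpr (neg_lt_zero.mpr hx)
  calc ∑ i ∈ range N, exp (-x) ^ i ≤ exp (-x) ^ 0 / (1 - exp (-x)) := by
        rw [range_eq_Ico]; exact geom_sum_Ico_le_of_lt_one (exp_nonneg _) hq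
    _ ≤ exp x / x := by
      rw [pow_zero, div_le_div_iff₀ (by linarith) hx, exp_neg]
      have := add_one_le_exp x
      field_simp
      linarith

lemma rpow_le_two_rpow_abs_mul_rpow {x y : ℝ} (s : ℝ) (hx : 0 < x) (hxy : x ≤ y)
    (hyx : y ≤ 2 * x) : x ^ s ≤ 2 ^ |s| * y ^ s := by
  have hy : 0 < y := hx.trans_le hxy
  rcases le_total 0 s with hs | hs
  · calc x ^ s ≤ 1 * y ^ s := by rw [one_mul]; gcongr
      _ ≤ 2 ^ |s| * y ^ s := by gcongr; exact one_le_rpow one_le_two (abs_nonneg s)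
  · calc x ^ s ≤ (y / 2) ^ s := rpow_le_rpow_of_nonpos (by positivity) (by linarith) hs
      _ = 2 ^ |s| * y ^ s := by
        rw [div_rpow hy.le zero_le_two, abs_of_nonpos hs, rpow_neg zero_le_two]
        ring

/-- The tangent line at `y` of the concave function `x ↦ x ^ p` lies above it; this is the
weighted AM-GM inequality `x ^ p * y ^ (1 - p) ≤ p * x + (1 - p) * y`. -/
lemma rpow_add_mul_sub_le_rpow {p x y : ℝ} (hx : 0 ≤ x) (hy : 0 < y) (hp₀ : 0 ≤ p)
    (hp₁ : p ≤ 1) : x ^ p + p * y ^ (p - 1) * (y - x) ≤ y ^ p := by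
  have amgm := geom_mean_le_arith_mean2_weighted hp₀ (by linarith) hx hy.le (add_sub_cancel p 1)
  have hy_inv : y ^ (p - 1) * y ^ (1 - p) = 1 := by
    rw [← rpow_add hy]; simp
  have hy_pow : y ^ (p - 1) * y = y ^ p := by
    rw [← rpow_add_one hy.ne']; simp
  calc x ^ p + p * y ^ (p - 1) * (y - x)
      = y ^ (p - 1) * (x ^ p * y ^ (1 - p)) + p * y ^ (p - 1) * (y - x) := by
        rw [mul_left_comm, hy_inv, mul_one]
    _ ≤ y ^ (p - 1) * (p * x + (1 - p) * y) + p * y ^ (p - 1) * (y - x) := by gcongr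
    _ = y ^ p := by rw [← hy_pow]; ring

lemma exp_mul_rpow_le_of_le {c p : ℝ} (hc : 0 ≤ c) (hp₀ : 0 ≤ p) (hp₁ : p ≤ 1)
    {k n : ℕ} (hkn : k ≤ n) (hn : 0 < n) :
    exp (c * k ^ p) ≤ exp (c * n ^ p) * exp (-(c * p * n ^ (p - 1))) ^ (n - k) := by
  have tangent := rpow_add_mul_sub_le_rpow (Nat.cast_nonneg k) (Nat.cast_pos.mpr hn) hp₀ hp₁
  rw [← exp_nat_mul, ← exp_add, exp_le_exp, Nat.cast_sub hkn]
  nlinarith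

section WeightedGeometricSum

variable (s : ℝ) {a κ : ℝ}

lemma sum_far_rpow_mul_exp_neg_pow_le (hκ : 0 ≤ κ) {n : ℕ} (hn : 0 < n) :
    ∑ k ∈ Icc 1 n with 2 * k ≤ n, (k : ℝ) ^ s * exp (-(κ * n ^ (-a))) ^ (n - k)
      ≤ n ^ (1 + |s|) * exp (-(κ / 2 * n ^ (1 - a))) := by
  have hn' : (0 : ℝ) < n := Nat.cast_pos.mpr hn
  have hterm : ∀ k ∈ {k ∈ Icc 1 n | 2 * k ≤ n},
      (k : ℝ) ^ s * exp (-(κ * n ^ (-a))) ^ (n - k)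
        ≤ n ^ |s| * exp (-(κ / 2 * n ^ (1 - a))) := by
    intro k hk
    simp only [mem_filter, mem_Icc] at hk
    have hk₁ : (1 : ℝ) ≤ k := Nat.one_le_cast.mpr hk.1.1
    have hnk : (n : ℝ) / 2 ≤ ((n - k : ℕ) : ℝ) := by
      have : (2 * k : ℝ) ≤ n := by exact_mod_cast hk.2
      rw [Nat.cast_sub hk.1.2]
      linarith
    gcongr
    · calc (k : ℝ) ^ s ≤ k ^ |s| := rpow_le_rpow_of_exponent_le hk₁ (le_abs_self s)
        _ ≤ n ^ |s| := by gcongr; exact_mod_cast hk.1.2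
    · have hx : 0 ≤ κ * (n : ℝ) ^ (-a) := by positivity
      rw [← exp_nat_mul, exp_le_exp, sub_eq_neg_add, rpow_add_one hn'.ne']
      nlinarith [mul_le_mul_of_nonneg_left hnk hx]
  calc _ ≤ #{k ∈ Icc 1 n | 2 * k ≤ n} • ((n : ℝ) ^ |s| * exp (-(κ / 2 * n ^ (1 - a)))) :=
        sum_le_card_nsmul _ _ _ hterm
    _ ≤ n • ((n : ℝ) ^ |s| * exp (-(κ / 2 * n ^ (1 - a)))) := by
        gcongr
        exact (card_filter_le _ _).trans (by simp)
    _ = n ^ (1 + |s|) * exp (-(κ / 2 * n ^ (1 - a))) := by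
        rw [nsmul_eq_mul, rpow_add hn', rpow_one, mul_assoc]

lemma sum_near_rpow_mul_exp_neg_pow_le (ha : 0 ≤ a) (hκ : 0 < κ) {n : ℕ} (hn : 0 < n) :
    ∑ k ∈ Icc 1 n with n < 2 * k, (k : ℝ) ^ s * exp (-(κ * n ^ (-a))) ^ (n - k)
      ≤ 2 ^ |s| * exp κ / κ * n ^ (s + a) := by
  have hn' : (0 : ℝ) < n := Nat.cast_pos.mpr hn
  set x := κ * (n : ℝ) ^ (-a)
  have hx : 0 < x := by positivity
  have hxκ : x ≤ κ := mul_le_of_le_one_right hκ.le (rpow_le_one_of_one_le_of_nonpos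
    (Nat.one_le_cast.mpr hn) (neg_nonpos.mpr ha))
  calc ∑ k ∈ Icc 1 n with n < 2 * k, (k : ℝ) ^ s * exp (-x) ^ (n - k)
      ≤ ∑ k ∈ Icc 1 n, 2 ^ |s| * (n : ℝ) ^ s * exp (-x) ^ (n - k) := by
        refine sum_le_sum_of_subset_of_nonneg (filter_subset _ _) (fun _ _ _ => by positivity)
          |>.trans' (sum_le_sum fun k hk => ?_)
        simp only [mem_filter, mem_Icc] at hk
        gcongr
        exact rpow_le_two_rpow_abs_mul_rpow s (by exact_mod_cast hk.1.1)
          (by exact_mod_cast hk.1.2) (by exact_mod_cast hk.2.le)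
    _ = 2 ^ |s| * n ^ s * ∑ j ∈ range n, exp (-x) ^ j := by
        rw [← mul_sum, ← Ico_add_one_right_eq_Icc, sum_Ico_reflect _ 1 le_rfl,
          range_eq_Ico, Nat.add_sub_cancel, Nat.sub_self]
    _ ≤ 2 ^ |s| * n ^ s * (exp κ / x) := by
        gcongr
        exact (geom_sum_exp_neg_le hx n).trans (by gcongr)
    _ = 2 ^ |s| * exp κ / κ * n ^ (s + a) := by
        simp only [x]
        rw [rpow_add hn', rpow_neg hn'.le]
        field_simp

lemma exists_sum_rpow_mul_exp_neg_pow_le (ha₀ : 0 ≤ a) (ha₁ : a < 1) (hκ : 0 < κ) :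
    ∃ C > 0, ∀ n : ℕ, 0 < n →
      ∑ k ∈ Icc 1 n, (k : ℝ) ^ s * exp (-(κ * n ^ (-a))) ^ (n - k) ≤ C * n ^ (s + a) := by
  obtain ⟨C, hC, hpoly⟩ :=
    exists_rpow_le_mul_exp_mul_rpow (1 + |s| - (s + a)) (half_pos hκ) (sub_pos.mpr ha₁)
  refine ⟨C + 2 ^ |s| * exp κ / κ, by positivity, fun n hn => ?_⟩
  have hn' : (0 : ℝ) < n := Nat.cast_pos.mpr hn
  have hfar : (n : ℝ) ^ (1 + |s|) * exp (-(κ / 2 * n ^ (1 - a))) ≤ C * n ^ (s + a) := by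
    rw [exp_neg, ← div_eq_mul_inv, div_le_iff₀ (exp_pos _),
      ← sub_add_cancel (1 + |s|) (s + a), rpow_add hn', mul_right_comm]
    gcongr
    exact hpoly n (Nat.one_le_cast.mpr hn)
  rw [← sum_filter_add_sum_filter_not _ (fun k => 2 * k ≤ n)]
  simp only [not_le]
  grw [sum_far_rpow_mul_exp_neg_pow_le s hκ.le hn, sum_near_rpow_mul_exp_neg_pow_le s ha₀ hκ hn,
    hfar, add_mul]

end WeightedGeometricSum

/-- **Weighted exponential sum bound** (Lemma G.2): for `a ∈ (0,1)`, `b ∈ ℝ`, `c > 0`,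
there is `C > 0` such that for all `n ≥ 1`,
`∑_{k=1}^n k^{-a} k^b exp(c k^{1-a}) ≤ C n^b exp(c n^{1-a})`. -/
theorem weighted_exponential_sum_bound
    (a b c : ℝ) (ha₀ : 0 < a) (ha₁ : a < 1) (hc : 0 < c) :
    ∃ C > (0:ℝ), ∀ n : ℕ, 1 ≤ n →
      ∑ k ∈ Finset.Icc 1 n, (k:ℝ) ^ (-a) * (k:ℝ) ^ b * Real.exp (c * (k:ℝ) ^ (1-a))
        ≤ C * (n:ℝ) ^ b * Real.exp (c * (n:ℝ) ^ (1-a)) := by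
  obtain ⟨C, hC, hsum⟩ :=
    exists_sum_rpow_mul_exp_neg_pow_le (-a + b) ha₀.le ha₁ (mul_pos hc (sub_pos.mpr ha₁))
  refine ⟨C, hC, fun n hn => ?_⟩
  calc ∑ k ∈ Icc 1 n, (k : ℝ) ^ (-a) * k ^ b * exp (c * k ^ (1 - a))
      ≤ ∑ k ∈ Icc 1 n, (k : ℝ) ^ (-a + b) *
          (exp (c * n ^ (1 - a)) * exp (-(c * (1 - a) * n ^ (-a))) ^ (n - k)) := by
        refine sum_le_sum fun k hk => ?_
        have hk := mem_Icc.mp hk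
        have hexp :=
          exp_mul_rpow_le_of_le hc.le (sub_nonneg.mpr ha₁.le) (sub_le_self 1 ha₀.le) hk.2 hn
        rw [sub_sub_cancel_left] at hexp
        rw [rpow_add (by exact_mod_cast hk.1)]
        gcongr
    _ = (∑ k ∈ Icc 1 n, (k : ℝ) ^ (-a + b) * exp (-(c * (1 - a) * n ^ (-a))) ^ (n - k)) *
          exp (c * n ^ (1 - a)) := by
        rw [sum_mul]
        exact sum_congr rfl fun _ _ => by ring
    _ ≤ C * n ^ b * exp (c * n ^ (1 - a)) := by
        grw [hsum n hn, neg_add_cancel_comm]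
end

section
/- Two-sided bound for the normalizing sequence: let s ∈ (0,1) and b_n := ∑_{k=1}^n exp(k^{1-s}/(1-s)). Then there are positive constants c and C such that for all n ≥ 1, c · n^{s} exp(n^{1-s}/(1-s)) ≤ b_n ≤ C · n^{s} exp(n^{1-s}/(1-s)). -/
/-!
With `E x = exp (x ^ (1 - s) / (1 - s))` (`stretchedExp`) and `F x = x ^ s * E x`
(`scaledStretchedExp`) one has
`F' = (1 + s x ^ (s - 1)) E`, which lies between `E` and `(1 + s) E` on `[1, ∞)`. Since `E` is
increasing, the mean value theorem on `[k, k + 1]` squeezes `F (k + 1) - F k` between `E k` and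
`(1 + s) E (k + 1)`; telescoping gives `F n ≤ (1 + s) b_n ≤ (1 + s) F (n + 1)`, and
`F (n + 1) ≤ 2 e ^ (1 / (1 - s)) F n` by subadditivity of `x ↦ x ^ (1 - s)`.
-/

open Real Finset

noncomputable def stretchedExp (s x : ℝ) : ℝ := exp (x ^ (1 - s) / (1 - s))

noncomputable def scaledStretchedExp (s x : ℝ) : ℝ := x ^ s * stretchedExp s x

section

variable {s : ℝ}

lemma stretchedExp_pos (s x : ℝ) : 0 < stretchedExp s x := exp_pos _

lemma stretchedExp_monotoneOn (hs₁ : s < 1) : MonotoneOn (stretchedExp s) (Set.Ici 0) := by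
  intro x hx y _ hxy
  have : 0 < 1 - s := by linarith
  unfold stretchedExp
  gcongr

lemma stretchedExp_add_one_le (hs₀ : 0 ≤ s) (hs₁ : s < 1) {x : ℝ} (hx : 0 ≤ x) :
    stretchedExp s (x + 1) ≤ exp (1 / (1 - s)) * stretchedExp s x := by
  have h1s : 0 < 1 - s := by linarith
  have hsub : (x + 1) ^ (1 - s) ≤ x ^ (1 - s) + 1 := by
    simpa using rpow_add_le_add_rpow hx zero_le_one h1s.le (by linarith)
  rw [stretchedExp, stretchedExp, ← exp_add, ← add_div]
  gcongr
  linarith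

lemma scaledStretchedExp_add_one_le (hs₀ : 0 ≤ s) (hs₁ : s < 1) {x : ℝ} (hx : 1 ≤ x) :
    scaledStretchedExp s (x + 1) ≤ 2 * exp (1 / (1 - s)) * scaledStretchedExp s x := by
  have hx₀ : 0 ≤ x := by linarith
  have hpow : (x + 1) ^ s ≤ 2 * x ^ s := by
    have := rpow_add_le_add_rpow hx₀ zero_le_one hs₀ hs₁.le
    have := one_le_rpow hx hs₀
    rw [one_rpow] at *
    linarith
  calc scaledStretchedExp s (x + 1)
      ≤ (2 * x ^ s) * (exp (1 / (1 - s)) * stretchedExp s x) :=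
        mul_le_mul hpow (stretchedExp_add_one_le hs₀ hs₁ hx₀) (stretchedExp_pos _ _).le
          (by positivity)
    _ = 2 * exp (1 / (1 - s)) * scaledStretchedExp s x := by rw [scaledStretchedExp]; ring

lemma hasDerivAt_stretchedExp (hs₁ : s ≠ 1) {x : ℝ} (hx : 0 < x) :
    HasDerivAt (stretchedExp s) (stretchedExp s x * x ^ (-s)) x := by
  have h1s : 1 - s ≠ 0 := sub_ne_zero.2 hs₁.symm
  have h := ((hasDerivAt_rpow_const (p := 1 - s) (Or.inl hx.ne')).div_const (1 - s)).exp
  refine h.congr_deriv ?_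
  rw [mul_div_right_comm, div_self h1s, one_mul, sub_sub_cancel_left]
  rfl

lemma hasDerivAt_scaledStretchedExp (hs₁ : s ≠ 1) {x : ℝ} (hx : 0 < x) :
    HasDerivAt (scaledStretchedExp s) ((s * x ^ (s - 1) + 1) * stretchedExp s x) x := by
  have h := (hasDerivAt_rpow_const (p := s) (Or.inl hx.ne')).mul (hasDerivAt_stretchedExp hs₁ hx)
  refine h.congr_deriv ?_
  rw [mul_left_comm, ← rpow_add hx, add_neg_cancel, rpow_zero]
  ring

lemma exists_scaledStretchedExp_add_one_sub_eq (hs₁ : s ≠ 1) {a : ℝ} (ha : 0 < a) :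
    ∃ ξ ∈ Set.Ioo a (a + 1), scaledStretchedExp s (a + 1) - scaledStretchedExp s a =
      (s * ξ ^ (s - 1) + 1) * stretchedExp s ξ := by
  have hderiv : ∀ x ∈ Set.Icc a (a + 1),
      HasDerivAt (scaledStretchedExp s) ((s * x ^ (s - 1) + 1) * stretchedExp s x) x :=
    fun x hx => hasDerivAt_scaledStretchedExp hs₁ (ha.trans_le hx.1)
  obtain ⟨ξ, hξ, hslope⟩ := exists_hasDerivAt_eq_slope _ _ (lt_add_one a)
    (fun x hx => (hderiv x hx).continuousAt.continuousWithinAt)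
    (fun x hx => hderiv x (Set.Ioo_subset_Icc_self hx))
  exact ⟨ξ, hξ, by rw [hslope, add_sub_cancel_left, div_one]⟩

lemma stretchedExp_le_scaledStretchedExp_add_one_sub (hs₀ : 0 ≤ s) (hs₁ : s < 1) {a : ℝ}
    (ha : 0 < a) :
    stretchedExp s a ≤ scaledStretchedExp s (a + 1) - scaledStretchedExp s a := by
  obtain ⟨ξ, hξ, hslope⟩ := exists_scaledStretchedExp_add_one_sub_eq hs₁.ne ha
  have hmono : stretchedExp s a ≤ stretchedExp s ξ :=
    stretchedExp_monotoneOn hs₁ (Set.mem_Ici.2 ha.le) (Set.mem_Ici.2 (ha.trans hξ.1).le)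
      hξ.1.le
  have hcoeff : 1 ≤ s * ξ ^ (s - 1) + 1 := by
    have := rpow_nonneg (ha.trans hξ.1).le (s - 1)
    nlinarith
  rw [hslope]
  nlinarith [stretchedExp_pos s ξ]

lemma scaledStretchedExp_add_one_sub_le (hs₀ : 0 ≤ s) (hs₁ : s < 1) {a : ℝ} (ha : 1 ≤ a) :
    scaledStretchedExp s (a + 1) - scaledStretchedExp s a ≤
      (1 + s) * stretchedExp s (a + 1) := by
  obtain ⟨ξ, hξ, hslope⟩ := exists_scaledStretchedExp_add_one_sub_eq hs₁.ne (by linarith)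
  have hmono : stretchedExp s ξ ≤ stretchedExp s (a + 1) :=
    stretchedExp_monotoneOn hs₁ (Set.mem_Ici.2 (by linarith [hξ.1]))
      (Set.mem_Ici.2 (by linarith)) hξ.2.le
  have hcoeff : s * ξ ^ (s - 1) + 1 ≤ 1 + s := by
    have := rpow_le_one_of_one_le_of_nonpos (ha.trans hξ.1.le) (by linarith : s - 1 ≤ 0)
    nlinarith
  rw [hslope]
  nlinarith [stretchedExp_pos s ξ]

lemma scaledStretchedExp_natCast_succ_sub_le (hs₀ : 0 < s) (hs₁ : s < 1) (k : ℕ) :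
    scaledStretchedExp s ↑(k + 1) - scaledStretchedExp s k ≤
      (1 + s) * stretchedExp s ↑(k + 1) := by
  rcases k.eq_zero_or_pos with rfl | hk
  · -- the mean value bound fails on `[0, 1]`, but there `scaledStretchedExp s 0 = 0`
    simp only [scaledStretchedExp, Nat.cast_zero, zero_rpow hs₀.ne', zero_mul, zero_add,
      Nat.cast_one, one_rpow, one_mul, sub_zero]
    nlinarith [stretchedExp_pos s 1]
  · push_cast
    exact scaledStretchedExp_add_one_sub_le hs₀.le hs₁ (by exact_mod_cast hk)

lemma sum_stretchedExp_le (hs₀ : 0 ≤ s) (hs₁ : s < 1) (n : ℕ) :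
    ∑ k ∈ range n, stretchedExp s ↑(k + 1) ≤ scaledStretchedExp s ↑(n + 1) := by
  calc ∑ k ∈ range n, stretchedExp s ↑(k + 1)
      ≤ ∑ k ∈ range n,
          (scaledStretchedExp s ↑(k + 1 + 1) - scaledStretchedExp s ↑(k + 1)) := by
        gcongr with k
        push_cast
        exact stretchedExp_le_scaledStretchedExp_add_one_sub hs₀ hs₁ (by positivity)
    _ = scaledStretchedExp s ↑(n + 1) - scaledStretchedExp s 1 := by
        rw [sum_range_sub (fun k => scaledStretchedExp s ↑(k + 1))]
        norm_num
    _ ≤ scaledStretchedExp s ↑(n + 1) := by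
        simp only [scaledStretchedExp, one_rpow, one_mul, sub_le_self_iff]
        exact (stretchedExp_pos s 1).le

lemma scaledStretchedExp_le_sum (hs₀ : 0 < s) (hs₁ : s < 1) (n : ℕ) :
    scaledStretchedExp s n ≤ (1 + s) * ∑ k ∈ range n, stretchedExp s ↑(k + 1) := by
  calc scaledStretchedExp s n
      = ∑ k ∈ range n, (scaledStretchedExp s ↑(k + 1) - scaledStretchedExp s k) := by
        rw [sum_range_sub (fun k : ℕ => scaledStretchedExp s k)]
        simp [scaledStretchedExp, zero_rpow hs₀.ne']
    _ ≤ (1 + s) * ∑ k ∈ range n, stretchedExp s ↑(k + 1) := by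
        rw [mul_sum]
        exact sum_le_sum fun k _ => scaledStretchedExp_natCast_succ_sub_le hs₀ hs₁ k

end

/-- **Two-sided bound for the normalizing sequence** (Corollary G.1): for `s ∈ (0,1)`
and `b_n = ∑_{k=1}^n exp(k^{1-s}/(1-s))`, there are `c, C > 0` such that for all `n ≥ 1`,
`c n^s exp(n^{1-s}/(1-s)) ≤ b_n ≤ C n^s exp(n^{1-s}/(1-s))`. -/
theorem normalizing_sequence_two_sided_bound
    (s : ℝ) (hs₀ : 0 < s) (hs₁ : s < 1)
    (b : ℕ → ℝ) (hb : ∀ n, b n = ∑ k ∈ Finset.Icc 1 n, Real.exp ((k:ℝ) ^ (1-s) / (1-s))) :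
    ∃ c > (0:ℝ), ∃ C > (0:ℝ), ∀ n : ℕ, 1 ≤ n →
      c * (n:ℝ) ^ s * Real.exp ((n:ℝ) ^ (1-s) / (1-s)) ≤ b n ∧
      b n ≤ C * (n:ℝ) ^ s * Real.exp ((n:ℝ) ^ (1-s) / (1-s)) := by
  have hb_range : ∀ n, b n = ∑ k ∈ range n, stretchedExp s ↑(k + 1) := fun n => by
    rw [hb, range_eq_Ico, sum_Ico_add' (fun k : ℕ => stretchedExp s k), zero_add,
      Ico_add_one_right_eq_Icc]
    rfl
  refine ⟨1 / (1 + s), by positivity, 2 * exp (1 / (1 - s)), by positivity,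
    fun n hn => ⟨?_, ?_⟩⟩
  · rw [mul_assoc, div_mul_eq_mul_div, one_mul, div_le_iff₀' (by linarith), hb_range]
    exact scaledStretchedExp_le_sum hs₀ hs₁ n
  · rw [mul_assoc _ ((n : ℝ) ^ s), hb_range]
    calc ∑ k ∈ range n, stretchedExp s ↑(k + 1) ≤ scaledStretchedExp s ↑(n + 1) :=
          sum_stretchedExp_le hs₀.le hs₁ n
      _ ≤ 2 * exp (1 / (1 - s)) * scaledStretchedExp s n := by
          push_cast
          exact scaledStretchedExp_add_one_le hs₀.le hs₁ (by exact_mod_cast hn)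
end

section
/- Explicit asymptotic covariances for the geometric median of the uniform law on the sphere: let d ≥ 3 and let X be uniformly distributed on the unit sphere S^{d-1} ⊂ ℝ^d. Then the geometric median of X is m = 0; the Hessian at m of the median objective G₀(h) := E[‖X−h‖ − ‖X‖] is Γ_m := E[(1/‖X‖)(I_d − (X⊗X)/‖X‖²)] = ((d−1)/d)·I_d; the covariance Σ' := E[(X/‖X‖)⊗(X/‖X‖)] equals (1/d)·I_d; consequently Σ_RM := ∫_0^∞ e^{-sΓ_m} Σ' e^{-sΓ_m} ds = (1/(2(d−1)))·I_d and Σ := Γ_m^{-1} Σ' Γ_m^{-1} = (d/(d−1)²)·I_d. -/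
open MeasureTheory ProbabilityTheory Filter Asymptotics
open scoped InnerProductSpace RealInnerProductSpace NNReal Topology BigOperators

noncomputable section

/-- The rank-one operator `u ⊗ v : w ↦ ⟪u, w⟫ v`. -/
def outer {H : Type*} [NormedAddCommGroup H] [InnerProductSpace ℝ H] (u v : H) :
    H →L[ℝ] H := (innerSL ℝ u).smulRight v

/-- The Frobenius (Hilbert–Schmidt) norm of an operator, w.r.t. a Hilbert basis. -/
def frobNorm {H : Type*} [NormedAddCommGroup H] [InnerProductSpace ℝ H]
    {ι : Type*} (e : HilbertBasis ι ℝ H) (A : H →L[ℝ] H) : ℝ :=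
  Real.sqrt (∑' i, ‖A (e i)‖ ^ 2)

/-!
Rotation invariance pins everything down. The second moment `∫ ⟪x, v⟫² dν` depends only on `‖v‖`,
since a reflection maps any vector to any other of the same norm; summing over an orthonormal basis
gives `‖v‖² / d`, and as `∫ x ⊗ x dν` is symmetric it equals `I / d`. On the sphere
`Γ_m = I - ∫ x ⊗ x dν` and `Σ' = ∫ x ⊗ x dν`, so all the operators are scalar.
For the median, invariance under `x ↦ -x` gives `2 G₀(h) = ∫ (‖x - h‖ + ‖x + h‖ - 2‖x‖) dν ≥ 0`.
Equality forces `x - h` and `x + h` onto a common ray, hence `ν` onto the line `ℝ h`, which would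
kill the second moment in a direction orthogonal to `h`.
-/

open Module

lemma NormedSpace.exp_smul_one {A : Type*} [NormedRing A] [NormedAlgebra ℝ A] (c : ℝ) :
    NormedSpace.exp (c • (1 : A)) = Real.exp c • 1 := by
  rw [← Algebra.algebraMap_eq_smul_one, ← Algebra.algebraMap_eq_smul_one,
    ← NormedSpace.algebraMap_exp_comm, Real.exp_eq_exp_ℝ]

section NormedSpace

variable {E : Type*} [NormedAddCommGroup E] [NormedSpace ℝ E]

lemma two_mul_norm_le_norm_sub_add_norm_add (x h : E) : 2 * ‖x‖ ≤ ‖x - h‖ + ‖x + h‖ := by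
  have hsum : x - h + (x + h) = (2 : ℝ) • x := by rw [two_smul]; abel
  simpa [hsum, norm_smul] using norm_add_le (x - h) (x + h)

lemma mem_span_singleton_of_norm_sub_add_norm_add_eq [StrictConvexSpace ℝ E] {x h : E}
    (hh : h ≠ 0) (heq : ‖x - h‖ + ‖x + h‖ = 2 * ‖x‖) : x ∈ ℝ ∙ h := by
  have hsum : x - h + (x + h) = (2 : ℝ) • x := by rw [two_smul]; abel
  have hray : SameRay ℝ (x - h) (x + h) := by
    rw [sameRay_iff_norm_add, hsum, norm_smul, Real.norm_two, heq]
  obtain ⟨u, a, b, -, -, hab, hxa, hxb⟩ := hray.exists_eq_smul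
  have hx : (2 : ℝ) • x = u := by rw [← hsum, hxa, hxb, ← add_smul, hab, one_smul]
  have hh2 : (2 : ℝ) • h = (b - a) • u := by
    rw [sub_smul, ← hxa, ← hxb, two_smul]; abel
  have hba : b - a ≠ 0 := fun h0 => hh (by simpa [h0] using hh2)
  refine Submodule.mem_span_singleton.2 ⟨(b - a)⁻¹, ?_⟩
  apply smul_right_injective E (two_ne_zero (α := ℝ))
  change (2 : ℝ) • (b - a)⁻¹ • h = (2 : ℝ) • x
  rw [smul_comm, hh2, smul_smul, inv_mul_cancel₀ hba, one_smul, hx]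

lemma integral_exp_neg_smul_comp_comp [CompleteSpace E] {c : ℝ} (hc : 0 < c) (a : ℝ) :
    ∫ s in Set.Ioi (0 : ℝ), (NormedSpace.exp (-(s • c • ContinuousLinearMap.id ℝ E))).comp
        ((a • ContinuousLinearMap.id ℝ E).comp
          (NormedSpace.exp (-(s • c • ContinuousLinearMap.id ℝ E))))
      = (a / (2 * c)) • ContinuousLinearMap.id ℝ E := by
  have hexp (s : ℝ) : NormedSpace.exp (-(s • c • ContinuousLinearMap.id ℝ E))
      = Real.exp (-(s * c)) • ContinuousLinearMap.id ℝ E := by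
    rw [smul_smul, ← neg_smul]
    exact NormedSpace.exp_smul_one _
  have hscalar (s : ℝ) : Real.exp (-(s * c)) * (a * Real.exp (-(s * c)))
      = a * Real.exp (-(2 * c) * s) := by
    rw [mul_left_comm, ← Real.exp_add]; ring_nf
  simp_rw [hexp, ContinuousLinearMap.smul_comp, ContinuousLinearMap.comp_smul,
    ContinuousLinearMap.id_comp, smul_smul, hscalar]
  rw [integral_smul_const, integral_const_mul, integral_exp_mul_Ioi (by linarith), mul_zero,
    Real.exp_zero]
  congr 1
  field_simp

end NormedSpace

section InnerProductSpace

variable {E : Type*} [NormedAddCommGroup E] [InnerProductSpace ℝ E]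

lemma outer_apply (u v w : E) : outer u v w = ⟪u, w⟫ • v := rfl

lemma norm_outer_le (u v : E) : ‖outer u v‖ ≤ ‖u‖ * ‖v‖ := by
  rw [outer, ContinuousLinearMap.norm_smulRight_apply, innerSL_apply_norm]

lemma continuous_outer_self : Continuous fun x : E => outer x x :=
  isBoundedBilinearMap_smulRight.continuous.comp ((innerSL ℝ).continuous.prodMk continuous_id)

lemma exists_linearIsometryEquiv_apply_eq {u w : E} (h : ‖u‖ = ‖w‖) :
    ∃ O : E ≃ₗᵢ[ℝ] E, O u = w :=
  ⟨_, Submodule.reflection_sub h⟩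

end InnerProductSpace

section Measure

variable {E : Type*} [NormedAddCommGroup E] [MeasurableSpace E] [BorelSpace E] {ν : Measure E}

lemma ae_norm_eq_one_of_measure_sphere [IsProbabilityMeasure ν]
    (h : ν (Metric.sphere 0 1) = 1) : ∀ᵐ x ∂ν, ‖x‖ = 1 := by
  rw [ae_iff_measure_eq (measurableSet_eq_fun continuous_norm.measurable
    measurable_const).nullMeasurableSet, measure_univ]
  simpa [Metric.sphere, dist_zero_right] using h

lemma integrable_norm_sub_sub_norm [IsFiniteMeasure ν] (h : E) :
    Integrable (fun x => ‖x - h‖ - ‖x‖) ν :=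
  .of_bound (by fun_prop) ‖h‖ <| ae_of_all _ fun x => by
    simpa using abs_norm_sub_norm_le (x - h) x

variable [InnerProductSpace ℝ E]

lemma integral_comp_linearIsometryEquiv {F : Type*} [NormedAddCommGroup F] [NormedSpace ℝ F]
    {O : E ≃ₗᵢ[ℝ] E} (hO : ν.map O = ν) (f : E → F) :
    ∫ x, f (O x) ∂ν = ∫ x, f x ∂ν :=
  MeasurePreserving.integral_comp' (f := O.toHomeomorph.toMeasurableEquiv)
    ⟨O.continuous.measurable, hO⟩ f

lemma integrable_outer_self [FiniteDimensional ℝ E] [IsFiniteMeasure ν]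
    (hsph : ∀ᵐ x ∂ν, ‖x‖ = 1) :
    Integrable (fun x => outer x x) ν :=
  .of_bound continuous_outer_self.aestronglyMeasurable 1 <| hsph.mono fun x hx =>
    (norm_outer_le x x).trans (by rw [hx, one_mul])

lemma integral_inner_sq_eq_of_norm_eq (hrot : ∀ O : E ≃ₗᵢ[ℝ] E, ν.map O = ν) {v w : E}
    (h : ‖v‖ = ‖w‖) : ∫ x, ⟪x, v⟫ ^ 2 ∂ν = ∫ x, ⟪x, w⟫ ^ 2 ∂ν := by
  obtain ⟨O, rfl⟩ := exists_linearIsometryEquiv_apply_eq h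
  rw [← integral_comp_linearIsometryEquiv (hrot O) fun x => ⟪x, O v⟫ ^ 2]
  simp

lemma integral_inner_sq [FiniteDimensional ℝ E] [IsProbabilityMeasure ν]
    (hsph : ∀ᵐ x ∂ν, ‖x‖ = 1) (hrot : ∀ O : E ≃ₗᵢ[ℝ] E, ν.map O = ν) (v : E) :
    ∫ x, ⟪x, v⟫ ^ 2 ∂ν = ‖v‖ ^ 2 / finrank ℝ E := by
  let b := stdOrthonormalBasis ℝ E
  have hint (w : E) : Integrable (fun x => ⟪x, w⟫ ^ 2) ν :=
    .of_bound (by fun_prop) (‖w‖ ^ 2) <| hsph.mono fun x hx => by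
      simpa [hx] using pow_le_pow_left₀ (abs_nonneg _) (abs_real_inner_le_norm x w) 2
  have hbasis : ∑ i, ∫ x, ⟪x, b i⟫ ^ 2 ∂ν = 1 := by
    rw [← integral_finsetSum _ fun i _ => hint (b i)]
    refine (integral_congr_ae (g := fun _ => (1 : ℝ)) (hsph.mono fun x hx => ?_)).trans
      (by simp)
    simpa [hx] using b.sum_sq_inner_left x
  have hscale (i) : ∫ x, ⟪x, v⟫ ^ 2 ∂ν = ‖v‖ ^ 2 * ∫ x, ⟪x, b i⟫ ^ 2 ∂ν := by
    rw [integral_inner_sq_eq_of_norm_eq hrot (w := ‖v‖ • b i) (by simp [norm_smul]),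
      ← integral_const_mul]
    simp_rw [inner_smul_right, mul_pow]
  obtain ⟨x, hx⟩ := hsph.exists
  have : Nontrivial E := nontrivial_of_ne x 0 (by rintro rfl; simp at hx)
  have hn : (0 : ℝ) < finrank ℝ E := by exact_mod_cast finrank_pos
  rw [eq_div_iff hn.ne', mul_comm]
  calc (finrank ℝ E : ℝ) * ∫ x, ⟪x, v⟫ ^ 2 ∂ν = ∑ i, ‖v‖ ^ 2 * ∫ x, ⟪x, b i⟫ ^ 2 ∂ν := by
        simp [← hscale]
    _ = ‖v‖ ^ 2 := by rw [← Finset.mul_sum, hbasis, mul_one]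

lemma integral_outer_self [FiniteDimensional ℝ E] [IsProbabilityMeasure ν]
    (hsph : ∀ᵐ x ∂ν, ‖x‖ = 1) (hrot : ∀ O : E ≃ₗᵢ[ℝ] E, ν.map O = ν) :
    ∫ x, outer x x ∂ν = (finrank ℝ E : ℝ)⁻¹ • ContinuousLinearMap.id ℝ E := by
  set T := ∫ x, outer x x ∂ν
  have hT (v w : E) : ⟪T v, w⟫ = ∫ x, ⟪x, v⟫ * ⟪x, w⟫ ∂ν := by
    have hint := integrable_outer_self hsph
    rw [ContinuousLinearMap.integral_apply hint, real_inner_comm,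
      ← integral_inner (hint.apply_continuousLinearMap v)]
    simp [outer_apply, real_inner_smul_right, real_inner_comm]
  set S := T - (finrank ℝ E : ℝ)⁻¹ • ContinuousLinearMap.id ℝ E
  have hS : (S : E →ₗ[ℝ] E).IsSymmetric := fun v w => by
    rw [ContinuousLinearMap.coe_coe, real_inner_comm (S w)]
    simp [S, inner_sub_left, real_inner_smul_left, hT, mul_comm, real_inner_comm w v]
  have hS0 : (S : E →ₗ[ℝ] E) = 0 := hS.inner_map_self_eq_zero.1 fun v => by
    simp [S, inner_sub_left, real_inner_smul_left, hT, ← sq, integral_inner_sq hsph hrot,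
      div_eq_inv_mul]
  exact sub_eq_zero.1 (ContinuousLinearMap.coe_injective hS0)

lemma integral_outer_normalized_self [FiniteDimensional ℝ E] [IsProbabilityMeasure ν]
    (hsph : ∀ᵐ x ∂ν, ‖x‖ = 1) (hrot : ∀ O : E ≃ₗᵢ[ℝ] E, ν.map O = ν) :
    ∫ x, outer (‖x‖⁻¹ • x) (‖x‖⁻¹ • x) ∂ν = (finrank ℝ E : ℝ)⁻¹ • ContinuousLinearMap.id ℝ E := by
  rw [← integral_outer_self hsph hrot]
  exact integral_congr_ae (hsph.mono fun x hx => by simp [hx])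

lemma integral_inv_norm_smul_id_sub_outer [FiniteDimensional ℝ E] [IsProbabilityMeasure ν]
    (hsph : ∀ᵐ x ∂ν, ‖x‖ = 1) (hrot : ∀ O : E ≃ₗᵢ[ℝ] E, ν.map O = ν) :
    ∫ x, (‖x‖⁻¹ • ContinuousLinearMap.id ℝ E - (‖x‖⁻¹ ^ 3) • outer x x) ∂ν
      = (1 - (finrank ℝ E : ℝ)⁻¹) • ContinuousLinearMap.id ℝ E := by
  rw [integral_congr_ae (g := fun x => ContinuousLinearMap.id ℝ E - outer x x)
      (hsph.mono fun x hx => by simp [hx]), integral_sub (integrable_const _)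
      (integrable_outer_self hsph), integral_const, integral_outer_self hsph hrot, probReal_univ,
    one_smul, sub_smul, one_smul]

lemma two_mul_integral_norm_sub_sub_norm [IsFiniteMeasure ν]
    (hneg : ν.map (LinearIsometryEquiv.neg ℝ) = ν) (h : E) :
    2 * ∫ x, (‖x - h‖ - ‖x‖) ∂ν = ∫ x, (‖x - h‖ + ‖x + h‖ - 2 * ‖x‖) ∂ν := by
  have hsymm : ∫ x, (‖x + h‖ - ‖x‖) ∂ν = ∫ x, (‖x - h‖ - ‖x‖) ∂ν := by
    rw [← integral_comp_linearIsometryEquiv hneg fun x => ‖x - h‖ - ‖x‖]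
    congr 1 with x
    simp [← norm_neg (-x - h), add_comm]
  have hadd := integral_add (integrable_norm_sub_sub_norm (ν := ν) h)
    (by simpa using integrable_norm_sub_sub_norm (ν := ν) (-h))
  rw [two_mul]
  nth_rw 2 [← hsymm]
  rw [← hadd]
  congr 1 with x
  ring

lemma integral_norm_sub_sub_norm_nonneg [IsFiniteMeasure ν]
    (hneg : ν.map (LinearIsometryEquiv.neg ℝ) = ν) (h : E) :
    0 ≤ ∫ x, (‖x - h‖ - ‖x‖) ∂ν := by
  have hsym := two_mul_integral_norm_sub_sub_norm hneg h
  have : 0 ≤ ∫ x, (‖x - h‖ + ‖x + h‖ - 2 * ‖x‖) ∂ν :=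
    integral_nonneg fun x => sub_nonneg.2 (two_mul_norm_le_norm_sub_add_norm_add x h)
  linarith

lemma eq_zero_of_integral_norm_sub_sub_norm_nonpos [FiniteDimensional ℝ E]
    [IsProbabilityMeasure ν] (hE : 2 ≤ finrank ℝ E) (hsph : ∀ᵐ x ∂ν, ‖x‖ = 1)
    (hrot : ∀ O : E ≃ₗᵢ[ℝ] E, ν.map O = ν) {h : E} (hle : ∫ x, (‖x - h‖ - ‖x‖) ∂ν ≤ 0) :
    h = 0 := by
  by_contra hh
  obtain ⟨w, hw, hw0⟩ : ∃ w ∈ (ℝ ∙ h)ᗮ, w ≠ 0 := by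
    refine Submodule.exists_mem_ne_zero_of_ne_bot fun hbot => ?_
    have := (ℝ ∙ h).finrank_add_finrank_orthogonal
    rw [hbot, finrank_bot, finrank_span_singleton hh] at this
    omega
  have hgap_nonneg : 0 ≤ fun x : E => ‖x - h‖ + ‖x + h‖ - 2 * ‖x‖ :=
    fun x => sub_nonneg.2 (two_mul_norm_le_norm_sub_add_norm_add x h)
  have hgap_int : Integrable (fun x : E => ‖x - h‖ + ‖x + h‖ - 2 * ‖x‖) ν :=
    ((integrable_norm_sub_sub_norm h).add (integrable_norm_sub_sub_norm (-h))).congr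
      (ae_of_all _ fun x => by simp only [Pi.add_apply, sub_neg_eq_add]; ring)
  have hgap : ∀ᵐ x ∂ν, ‖x - h‖ + ‖x + h‖ - 2 * ‖x‖ = 0 := by
    refine (integral_eq_zero_iff_of_nonneg hgap_nonneg hgap_int).1 (le_antisymm ?_
      (integral_nonneg hgap_nonneg))
    linarith [two_mul_integral_norm_sub_sub_norm (hrot (.neg ℝ)) h]
  have hw_sq : ∫ x, ⟪x, w⟫ ^ 2 ∂ν = 0 := integral_eq_zero_of_ae <| hgap.mono fun x hx => by
    have hx_mem := mem_span_singleton_of_norm_sub_add_norm_add_eq hh (by linarith)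
    simp [Submodule.inner_right_of_mem_orthogonal hx_mem hw]
  rw [integral_inner_sq hsph hrot] at hw_sq
  have : (0 : ℝ) < finrank ℝ E := by exact_mod_cast (by omega : 0 < finrank ℝ E)
  simp [hw0, this.ne'] at hw_sq

end Measure

/-- **Explicit asymptotic covariances for the geometric median of the uniform law on
the sphere** (Section 5.3): if `X` is uniform on the unit sphere of `ℝ^d`, `d ≥ 3`
(i.e. its law is the rotation-invariant probability measure carried by the sphere),
then the geometric median is `m = 0`, `Γ_m = ((d-1)/d)·I`, `Σ' = (1/d)·I`,
`Σ_RM = (1/(2(d-1)))·I` and `Σ = Γ_m⁻¹ Σ' Γ_m⁻¹ = (d/(d-1)²)·I`. -/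
theorem geometric_median_uniform_sphere
    (d : ℕ) (hd : 3 ≤ d)
    (ν : Measure (EuclideanSpace ℝ (Fin d))) [IsProbabilityMeasure ν]
    -- X uniform on the unit sphere : carried by the sphere and rotation invariant
    (hsphere : ν (Metric.sphere (0 : EuclideanSpace ℝ (Fin d)) 1) = 1)
    (hrot : ∀ O : EuclideanSpace ℝ (Fin d) ≃ₗᵢ[ℝ] EuclideanSpace ℝ (Fin d),
      ν.map O = ν)
    -- the median objective
    (G₀ : EuclideanSpace ℝ (Fin d) → ℝ)
    (hG₀ : ∀ h, G₀ h = ∫ x, (‖x - h‖ - ‖x‖) ∂ν)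
    -- the Hessian at m = 0 and the covariance Σ'
    (Γm Sp : EuclideanSpace ℝ (Fin d) →L[ℝ] EuclideanSpace ℝ (Fin d))
    (hΓm : Γm = ∫ x, (‖x‖⁻¹ • ContinuousLinearMap.id ℝ (EuclideanSpace ℝ (Fin d))
      - (‖x‖⁻¹ ^ 3) • outer x x) ∂ν)
    (hSp : Sp = ∫ x, outer (‖x‖⁻¹ • x) (‖x‖⁻¹ • x) ∂ν) :
    -- m = 0 is the unique geometric median
    (∀ h, G₀ 0 ≤ G₀ h) ∧ (∀ h, (∀ h', G₀ h ≤ G₀ h') → h = 0) ∧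
    -- Γ_m = ((d-1)/d) I
    Γm = (((d:ℝ) - 1) / (d:ℝ)) • ContinuousLinearMap.id ℝ (EuclideanSpace ℝ (Fin d)) ∧
    -- Σ' = (1/d) I
    Sp = ((d:ℝ))⁻¹ • ContinuousLinearMap.id ℝ (EuclideanSpace ℝ (Fin d)) ∧
    -- Σ_RM = ∫_0^∞ e^{-sΓ_m} Σ' e^{-sΓ_m} ds = (1/(2(d-1))) I
    (∫ s in Set.Ioi (0:ℝ),
        (NormedSpace.exp (-(s • Γm))).comp (Sp.comp (NormedSpace.exp (-(s • Γm)))))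
      = (1 / (2 * ((d:ℝ) - 1))) • ContinuousLinearMap.id ℝ (EuclideanSpace ℝ (Fin d)) ∧
    -- Σ = Γ_m⁻¹ Σ' Γ_m⁻¹ = (d/(d-1)²) I
    (∃ Γinv : EuclideanSpace ℝ (Fin d) →L[ℝ] EuclideanSpace ℝ (Fin d),
      Γinv.comp Γm = ContinuousLinearMap.id ℝ (EuclideanSpace ℝ (Fin d)) ∧
      Γm.comp Γinv = ContinuousLinearMap.id ℝ (EuclideanSpace ℝ (Fin d)) ∧
      Γinv.comp (Sp.comp Γinv)
        = ((d:ℝ) / ((d:ℝ) - 1) ^ 2) • ContinuousLinearMap.id ℝ (EuclideanSpace ℝ (Fin d))) := by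
  have hsph := ae_norm_eq_one_of_measure_sphere hsphere
  have hd3 : (3 : ℝ) ≤ d := by exact_mod_cast hd
  have hd1 : (0 : ℝ) < d - 1 := by linarith
  have hd0 : (d : ℝ) ≠ 0 := by linarith
  have hSp' : Sp = ((d:ℝ))⁻¹ • ContinuousLinearMap.id ℝ _ := by
    rw [hSp, integral_outer_normalized_self hsph hrot, finrank_euclideanSpace_fin]
  have hΓm' : Γm = (((d:ℝ) - 1) / (d:ℝ)) • ContinuousLinearMap.id ℝ _ := by
    rw [hΓm, integral_inv_norm_smul_id_sub_outer hsph hrot, finrank_euclideanSpace_fin, sub_div,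
      div_self hd0, one_div]
  have hG₀_zero : G₀ 0 = 0 := by simp [hG₀]
  have hmin (h) : G₀ 0 ≤ G₀ h := by
    rw [hG₀_zero, hG₀]
    exact integral_norm_sub_sub_norm_nonneg (hrot _) h
  refine ⟨hmin, fun h hh => ?_, hΓm', hSp', ?_, ?_⟩
  · refine eq_zero_of_integral_norm_sub_sub_norm_nonpos
      (by rw [finrank_euclideanSpace_fin]; omega) hsph hrot ?_
    rw [← hG₀, ← hG₀_zero]
    exact hh 0
  · rw [hΓm', hSp', integral_exp_neg_smul_comp_comp (by positivity)]
    congr 1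
    field_simp
  · refine ⟨((d:ℝ) / ((d:ℝ) - 1)) • ContinuousLinearMap.id ℝ _, ?_, ?_, ?_⟩ <;>
      simp only [hΓm', hSp', ContinuousLinearMap.smul_comp, ContinuousLinearMap.comp_smul,
        ContinuousLinearMap.id_comp, smul_smul]
    · rw [div_mul_div_cancel₀ hd0, div_self hd1.ne', one_smul]
    · rw [div_mul_div_cancel₀ hd1.ne', div_self hd0, one_smul]
    · congr 1
      field_simp
end
end
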